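/- If there exists X = Xᵀ > 0 with F_cᵀX + XF_c + XG_cG_cᵀX + H_cᵀH_c ≤ 0 and F_c Hurwitz, then ‖H_c(sI - F_c)⁻¹ G_c‖_∞ ≤ 1. -/

import Mathlib

/-!
Put `T(s) = H (sI - F)⁻¹ G`. For an input `u` and `x = (sI - F)⁻¹ G u`, so that `F x = s x - G u`,
the Riccati form `M = Fᴴ X + X F + X G Gᴴ X + Hᴴ H` with Hermitian `X` satisfies, on the imaginary
axis `s̄ = -s`, the completion-of-squares identity
`xᴴ M x + ‖u‖² = ‖T(s) u‖² + ‖u - Gᴴ X x‖²`.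
Hence `M ≤ 0` forces `‖T(s) u‖ ≤ ‖u‖`, i.e. `1 - T(s)ᴴ T(s) ≥ 0`, at every `s = iω`, where
`sI - F` is invertible because `F` is Hurwitz.
-/

open Matrix ComplexOrder

namespace Matrix

variable {R S ι κ μ : Type*} [Fintype ι] [Fintype κ] [Fintype μ]

def riccatiForm [Ring R] [StarRing R] (A X : Matrix ι ι R) (G : Matrix ι κ R)
    (H : Matrix μ ι R) : Matrix ι ι R :=
  Aᴴ * X + X * A + X * G * Gᴴ * X + Hᴴ * H

theorem riccatiForm_map [Ring R] [StarRing R] [Ring S] [StarRing S] (f : R →+* S)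
    (hf : Function.Semiconj f star star) (A X : Matrix ι ι R) (G : Matrix ι κ R)
    (H : Matrix μ ι R) :
    (riccatiForm A X G H).map f = riccatiForm (A.map f) (X.map f) (G.map f) (H.map f) := by
  simp only [riccatiForm, Matrix.map_add f (map_add f), Matrix.map_mul, conjTranspose_map f hf]

theorem star_dotProduct_conjTranspose_mulVec [Semiring R] [StarRing R] (B : Matrix κ ι R)
    (x : ι → R) (y : κ → R) : star x ⬝ᵥ (Bᴴ *ᵥ y) = star (B *ᵥ x) ⬝ᵥ y := by
  rw [star_mulVec, ← dotProduct_mulVec]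

theorem star_dotProduct_riccatiForm_mulVec_add [CommRing R] [StarRing R]
    {A X : Matrix ι ι R} {G : Matrix ι κ R} (H : Matrix μ ι R) (hX : X.IsHermitian) {s : R}
    (hs : star s = -s) {x : ι → R} {u : κ → R} (hx : A *ᵥ x = s • x - G *ᵥ u) :
    star x ⬝ᵥ (riccatiForm A X G H *ᵥ x) + star u ⬝ᵥ u =
      star (H *ᵥ x) ⬝ᵥ (H *ᵥ x) + star (u - Gᴴ *ᵥ (X *ᵥ x)) ⬝ᵥ (u - Gᴴ *ᵥ (X *ᵥ x)) := by
  set y := X *ᵥ x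
  set v := Gᴴ *ᵥ y
  have hAX : star x ⬝ᵥ ((Aᴴ * X) *ᵥ x) = star s * (star x ⬝ᵥ y) - star u ⬝ᵥ v := by
    rw [← mulVec_mulVec, star_dotProduct_conjTranspose_mulVec, hx, star_sub, sub_dotProduct,
      star_smul, smul_dotProduct, ← star_dotProduct_conjTranspose_mulVec, smul_eq_mul]
  have hyx : star y ⬝ᵥ x = star x ⬝ᵥ y := by
    rw [← star_dotProduct_conjTranspose_mulVec, hX.eq]
  have hyG : star y ⬝ᵥ (G *ᵥ u) = star v ⬝ᵥ u := by
    simpa only [conjTranspose_conjTranspose] using star_dotProduct_conjTranspose_mulVec Gᴴ y u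
  have hXA : star x ⬝ᵥ ((X * A) *ᵥ x) = s * (star x ⬝ᵥ y) - star v ⬝ᵥ u := by
    rw [← mulVec_mulVec]
    conv_lhs => rw [← hX.eq]
    rw [star_dotProduct_conjTranspose_mulVec, hx, dotProduct_sub, dotProduct_smul, hyx, hyG,
      smul_eq_mul]
  have hXGGX : star x ⬝ᵥ ((X * G * Gᴴ * X) *ᵥ x) = star v ⬝ᵥ v := by
    rw [← mulVec_mulVec, ← mulVec_mulVec, ← mulVec_mulVec, ← hX.eq,
      star_dotProduct_conjTranspose_mulVec, ← conjTranspose_conjTranspose G,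
      star_dotProduct_conjTranspose_mulVec, conjTranspose_conjTranspose, hX.eq]
  have hHH : star x ⬝ᵥ ((Hᴴ * H) *ᵥ x) = star (H *ᵥ x) ⬝ᵥ (H *ᵥ x) := by
    rw [← mulVec_mulVec, star_dotProduct_conjTranspose_mulVec]
  simp only [riccatiForm, add_mulVec, dotProduct_add, hAX, hXA, hXGGX, hHH, hs, star_sub,
    sub_dotProduct, dotProduct_sub]
  ring

variable [CommRing R] [PartialOrder R] [StarRing R] [StarOrderedRing R]
  [DecidableEq ι] [DecidableEq κ]

theorem posSemidef_one_sub_conjTranspose_mul_self_of_riccatiForm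
    {A X : Matrix ι ι R} {G : Matrix ι κ R} {H : Matrix μ ι R} (hX : X.IsHermitian)
    (hM : (-riccatiForm A X G H).PosSemidef) {s : R} (hs : star s = -s)
    (hS : IsUnit (s • 1 - A)) :
    (1 - (H * (s • 1 - A)⁻¹ * G)ᴴ * (H * (s • 1 - A)⁻¹ * G)).PosSemidef := by
  refine .of_dotProduct_mulVec_nonneg
    (isHermitian_one.sub (isHermitian_conjTranspose_mul_self _)) fun u => ?_
  set x := (s • 1 - A)⁻¹ *ᵥ (G *ᵥ u)
  have hx : A *ᵥ x = s • x - G *ᵥ u := by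
    have : (s • 1 - A) *ᵥ x = G *ᵥ u := by
      rw [mulVec_mulVec, mul_nonsing_inv _ ((isUnit_iff_isUnit_det _).mp hS), one_mulVec]
    rw [sub_mulVec, smul_mulVec, one_mulVec] at this
    rw [← this, sub_sub_cancel]
  have hMx := hM.dotProduct_mulVec_nonneg x
  rw [neg_mulVec, dotProduct_neg, neg_nonneg] at hMx
  have hTu : (H * (s • 1 - A)⁻¹ * G) *ᵥ u = H *ᵥ x := by
    rw [← mulVec_mulVec, ← mulVec_mulVec]
  rw [sub_mulVec, one_mulVec, dotProduct_sub, ← mulVec_mulVec,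
    star_dotProduct_conjTranspose_mulVec, hTu, sub_nonneg]
  calc star (H *ᵥ x) ⬝ᵥ (H *ᵥ x)
      ≤ star (H *ᵥ x) ⬝ᵥ (H *ᵥ x) + star (u - Gᴴ *ᵥ (X *ᵥ x)) ⬝ᵥ (u - Gᴴ *ᵥ (X *ᵥ x)) :=
        le_add_of_nonneg_right (dotProduct_star_self_nonneg _)
    _ = star x ⬝ᵥ (riccatiForm A X G H *ᵥ x) + star u ⬝ᵥ u :=
        (star_dotProduct_riccatiForm_mulVec_add H hX hs hx).symm
    _ ≤ star u ⬝ᵥ u := add_le_of_nonpos_left hMx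

end Matrix

theorem Matrix.PosSemidef.map_complexOfReal {ι : Type*} [Fintype ι] [DecidableEq ι]
    {M : Matrix ι ι ℝ} (hM : M.PosSemidef) : (M.map Complex.ofReal).PosSemidef := by
  obtain ⟨B, rfl⟩ : ∃ B : Matrix ι ι ℝ, M = star B * B := by
    open scoped MatrixOrder in exact CStarAlgebra.nonneg_iff_eq_star_mul_self.mp hM.nonneg
  change ((star B * B).map Complex.ofRealHom).PosSemidef
  rw [Matrix.map_mul, star_eq_conjTranspose,
    conjTranspose_map Complex.ofRealHom fun _ => (Complex.conj_ofReal _).symm]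
  exact posSemidef_conjTranspose_mul_self _

theorem stmt_15_general (n m p : ℕ)
    (Fc : Matrix (Fin n) (Fin n) ℝ) (Gc : Matrix (Fin n) (Fin m) ℝ)
    (Hc : Matrix (Fin p) (Fin n) ℝ)
    (hFc : ∀ μ ∈ spectrum ℂ (Fc.map (Complex.ofReal)), μ.re < 0)
    (X : Matrix (Fin n) (Fin n) ℝ) (hXsym : Xᵀ = X)
    (hLMI : (-(Fcᵀ * X + X * Fc + X * Gc * Gcᵀ * X + Hcᵀ * Hc)).PosSemidef) :
    ∀ ω : ℝ,
      ((1 : Matrix (Fin m) (Fin m) ℂ) -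
        ((Hc.map Complex.ofReal) * ((Complex.I * ω) • 1 - Fc.map Complex.ofReal)⁻¹ *
          (Gc.map Complex.ofReal))ᴴ *
        ((Hc.map Complex.ofReal) * ((Complex.I * ω) • 1 - Fc.map Complex.ofReal)⁻¹ *
          (Gc.map Complex.ofReal))).PosSemidef := by
  intro ω
  have hconj : Function.Semiconj Complex.ofRealHom star star :=
    fun _ => (Complex.conj_ofReal _).symm
  have hS : IsUnit ((Complex.I * ω) • 1 - Fc.map Complex.ofReal) := by
    rw [← Algebra.algebraMap_eq_smul_one, ← spectrum.notMem_iff]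
    intro hmem
    simpa using hFc _ hmem
  have hX : (X.map Complex.ofRealHom).IsHermitian :=
    IsHermitian.map (by rwa [IsHermitian, conjTranspose_eq_transpose_of_trivial]) _ hconj
  have hM : (-riccatiForm (Fc.map Complex.ofRealHom) (X.map Complex.ofRealHom)
      (Gc.map Complex.ofRealHom) (Hc.map Complex.ofRealHom)).PosSemidef := by
    have hreal : Fcᵀ * X + X * Fc + X * Gc * Gcᵀ * X + Hcᵀ * Hc = riccatiForm Fc X Gc Hc := by
      simp [riccatiForm]
    rw [← riccatiForm_map _ hconj, ← Matrix.map_neg _ (map_neg _)]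
    exact (hreal ▸ hLMI).map_complexOfReal
  refine posSemidef_one_sub_conjTranspose_mul_self_of_riccatiForm hX hM ?_ hS
  simp

theorem stmt_15 (n m p : ℕ)
    (Fc : Matrix (Fin n) (Fin n) ℝ) (Gc : Matrix (Fin n) (Fin m) ℝ)
    (Hc : Matrix (Fin p) (Fin n) ℝ)
    (hFc : ∀ μ ∈ spectrum ℂ (Fc.map (Complex.ofReal)), μ.re < 0)
    (X : Matrix (Fin n) (Fin n) ℝ) (hXsym : Xᵀ = X) (hX : X.PosDef)
    (hLMI : (-(Fcᵀ * X + X * Fc + X * Gc * Gcᵀ * X + Hcᵀ * Hc)).PosSemidef) :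
    ∀ ω : ℝ,
      ((1 : Matrix (Fin m) (Fin m) ℂ) -
        ((Hc.map Complex.ofReal) * ((Complex.I * ω) • 1 - Fc.map Complex.ofReal)⁻¹ *
          (Gc.map Complex.ofReal))ᴴ *
        ((Hc.map Complex.ofReal) * ((Complex.I * ω) • 1 - Fc.map Complex.ofReal)⁻¹ *
          (Gc.map Complex.ofReal))).PosSemidef :=
  stmt_15_general n m p Fc Gc Hc hFc X hXsym hLMI
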